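/- The measure ρ on S = {−,+}×ℕ defined by ρ(−,k) = ρ(+,k) = (2^{k+1}−1)·2^{-(k+2)} is Q-invariant for the Hata transition matrix, i.e. ρ(t) = Σ_{s∈S} ρ(s)·q(s,t) for all t ∈ S, and it is the unique Q-invariant measure up to a constant multiple: any nonzero measure ρ' on S with ρ'(t) = Σ_s ρ'(s)q(s,t) for all t satisfies ρ' = c·ρ for some constant c > 0. -/

import Mathlib

open scoped ENNReal Classical

noncomputable section

/-- The state space of the Markov chain for the Hata map: `(false,k)` codes `I_k^-`
and `(true,k)` codes `I_k^+`. -/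
abbrev S : Type := Bool × ℕ

/-- The transition matrix `Q` of the Hata map with `p = 1/2`:
`q((±,k),(±,k±1)) = 1/2` (same sign, neighbouring index) and
`q((∓,0),(±,j)) = 2^{-(j+2)}`; all other entries vanish. -/
def qH : S → S → ℝ≥0∞ := fun s t =>
  if s.1 = t.1 ∧ (t.2 = s.2 + 1 ∨ s.2 = t.2 + 1) then 1/2
  else if s.1 ≠ t.1 ∧ s.2 = 0 then (1/2)^(t.2+2)
  else 0

/-- The measure `ρ(±,k) = (2^{k+1}-1)·2^{-(k+2)}` on the state space. -/
def rhoH : S → ℝ≥0∞ := fun s => ((2:ℝ≥0∞)^(s.2+1) - 1) / 2^(s.2+2)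

/-! For finite weights, `ρ = ρQ` is a system of real balance equations. If `x` solves it and
`a = x (!b, 0)`, then `k ↦ x (b, k) + a / 2 ^ k` has vanishing second differences, so it is affine
with slope `x (b, 0) - x (!b, 0)`. Nonnegativity of `x` makes both slopes nonnegative, hence
`x (true, 0) = x (false, 0) = m` and `x (b, k) = m (2 - 2⁻ᵏ) = 4 m ρ (b, k)`. -/

lemma tsum_mul_qH_zero (f : S → ℝ≥0∞) (b : Bool) :
    ∑' s, f s * qH s (b, 0) = f (b, 1) * (1/2) + f (!b, 0) * (1/2) ^ 2 := by
  rw [tsum_eq_sum (s := {(b, 1), (!b, 0)})]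
  · simp [qH]
  · rintro ⟨c, m⟩ hs
    cases b <;> cases c <;> simp_all [qH]

lemma tsum_mul_qH_succ (f : S → ℝ≥0∞) (b : Bool) (k : ℕ) :
    ∑' s, f s * qH s (b, k + 1)
      = f (b, k) * (1/2) + f (b, k + 2) * (1/2) + f (!b, 0) * (1/2) ^ (k + 3) := by
  rw [tsum_eq_sum (s := {(b, k), (b, k + 2), (!b, 0)})]
  · rw [Finset.sum_insert (by simp), Finset.sum_pair (by simp)]
    simp [qH, add_assoc]
  · rintro ⟨c, m⟩ hs
    cases b <;> cases c <;> simp_all [qH] <;> omega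

def IsBalanced (x : Bool → ℕ → ℝ) : Prop :=
  ∀ b, x b 0 = x b 1 / 2 + x (!b) 0 / 4 ∧
    ∀ k, x b (k + 1) = x b k / 2 + x b (k + 2) / 2 + x (!b) 0 / 2 ^ (k + 3)

lemma invariant_iff_isBalanced (f : S → ℝ≥0∞) (hf : ∀ s, f s ≠ ⊤) :
    (∀ t, f t = ∑' s, f s * qH s t) ↔ IsBalanced fun b k => (f (b, k)).toReal := by
  have hzero (b : Bool) : f (b, 0) = ∑' s, f s * qH s (b, 0) ↔
      (f (b, 0)).toReal = (f (b, 1)).toReal / 2 + (f (!b, 0)).toReal / 4 := by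
    have := hf (b, 1)
    have := hf (!b, 0)
    rw [tsum_mul_qH_zero, ← ENNReal.toReal_eq_toReal_iff' (hf _) (by finiteness),
      ENNReal.toReal_add (by finiteness) (by finiteness)]
    norm_num [ENNReal.toReal_mul, div_eq_mul_inv]
  have hsucc (b : Bool) (k : ℕ) : f (b, k + 1) = ∑' s, f s * qH s (b, k + 1) ↔
      (f (b, k + 1)).toReal = (f (b, k)).toReal / 2 + (f (b, k + 2)).toReal / 2
        + (f (!b, 0)).toReal / 2 ^ (k + 3) := by
    have := hf (b, k)
    have := hf (b, k + 2)
    have := hf (!b, 0)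
    rw [tsum_mul_qH_succ, ← ENNReal.toReal_eq_toReal_iff' (hf _) (by finiteness),
      ENNReal.toReal_add (by finiteness) (by finiteness),
      ENNReal.toReal_add (by finiteness) (by finiteness)]
    simp [ENNReal.toReal_mul, div_eq_mul_inv]
  unfold IsBalanced
  rw [Prod.forall]
  refine forall_congr' fun b => ?_
  rw [← Nat.and_forall_add_one, hzero]
  simp only [hsucc]

lemma eq_add_mul_of_second_difference_eq_zero {y : ℕ → ℝ}
    (h : ∀ k, y (k + 2) - 2 * y (k + 1) + y k = 0) (k : ℕ) : y k = y 0 + (y 1 - y 0) * k := by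
  induction k using Nat.twoStepInduction with
  | zero => simp
  | one => simp
  | more n ih₀ ih₁ =>
    push_cast at ih₁ ⊢
    linear_combination h n + 2 * ih₁ - ih₀

lemma nonneg_of_forall_nonneg_add_mul {c d : ℝ} (h : ∀ k : ℕ, 0 ≤ c + d * k) : 0 ≤ d := by
  by_contra! hd
  obtain ⟨n, hn⟩ := exists_nat_gt (c / -d)
  rw [div_lt_iff₀ (neg_pos.2 hd)] at hn
  linarith [h n]

namespace IsBalanced

variable {x : Bool → ℕ → ℝ}

lemma eq_add_mul_sub (hx : IsBalanced x) (b : Bool) (k : ℕ) :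
    x b k = x b 0 + x (!b) 0 + (x b 0 - x (!b) 0) * k - x (!b) 0 / 2 ^ k := by
  have hy := eq_add_mul_of_second_difference_eq_zero (y := fun k => x b k + x (!b) 0 / 2 ^ k) ?_ k
  · have h₀ := (hx b).1
    simp only [pow_zero, pow_one, div_one] at hy
    linear_combination hy - 2 * k * h₀
  · intro k
    have hk := (hx b).2 k
    simp only [pow_succ] at hk ⊢
    field_simp at hk ⊢
    linear_combination -hk

lemma eq_of_nonneg (hx : IsBalanced x) (h0 : ∀ b k, 0 ≤ x b k) (b : Bool) : x b 0 = x (!b) 0 := by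
  have hd (b : Bool) : 0 ≤ x b 0 - x (!b) 0 := by
    refine nonneg_of_forall_nonneg_add_mul (c := x b 0 + x (!b) 0) fun k => ?_
    have hk := hx.eq_add_mul_sub b k
    have hpow : 0 ≤ x (!b) 0 / 2 ^ k := div_nonneg (h0 _ _) (by positivity)
    linarith [h0 b k]
  linarith [hd b, Bool.not_not b ▸ hd (!b)]

end IsBalanced

lemma rhoH_ne_top (s : S) : rhoH s ≠ ⊤ :=
  ENNReal.div_ne_top (by finiteness) (by positivity)

lemma toReal_rhoH (s : S) : (rhoH s).toReal = (2 ^ (s.2 + 1) - 1) / 2 ^ (s.2 + 2) := by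
  rw [rhoH, ENNReal.toReal_div, ENNReal.toReal_sub_of_le (one_le_pow₀ one_le_two) (by finiteness)]
  simp

lemma isBalanced_toReal_rhoH : IsBalanced fun b k => (rhoH (b, k)).toReal := by
  refine fun b => ⟨?_, fun k => ?_⟩ <;> simp only [toReal_rhoH] <;> field_simp <;> ring

lemma IsBalanced.eq_mul_toReal_rhoH {x : Bool → ℕ → ℝ} (hx : IsBalanced x)
    (h0 : ∀ b k, 0 ≤ x b k) (b : Bool) (k : ℕ) : x b k = 4 * x true 0 * (rhoH (b, k)).toReal := by
  have hsym (c : Bool) : x c 0 = x true 0 := by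
    cases c
    · exact hx.eq_of_nonneg h0 false
    · rfl
  rw [hx.eq_add_mul_sub, hsym b, hsym (!b), toReal_rhoH]
  field_simp
  ring

/-- The measure `ρ(±,k) = (2^{k+1}-1)·2^{-(k+2)}` is `Q`-invariant for the Hata transition
matrix, and it is the unique `Q`-invariant measure up to a constant multiple: any nonzero
(σ-finite, i.e. finite-valued on states) invariant measure `ρ'` equals `c·ρ` for some
constant `c > 0`. -/
theorem hata_chain_invariant_measure :
    (∀ t : S, rhoH t = ∑' s : S, rhoH s * qH s t)
    ∧ ∀ ρ' : S → ℝ≥0∞, (∃ s, ρ' s ≠ 0) → (∀ s, ρ' s < ⊤) →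
        (∀ t : S, ρ' t = ∑' s : S, ρ' s * qH s t) →
        ∃ c : ℝ≥0∞, 0 < c ∧ c ≠ ⊤ ∧ ∀ s, ρ' s = c * rhoH s := by
  refine ⟨(invariant_iff_isBalanced rhoH rhoH_ne_top).2 isBalanced_toReal_rhoH,
    fun ρ' ⟨s₀, hs₀⟩ hfin hinv => ?_⟩
  have hfin' (s : S) : ρ' s ≠ ⊤ := (hfin s).ne
  have hρ' (s : S) : (ρ' s).toReal = 4 * (ρ' (true, 0)).toReal * (rhoH s).toReal :=
    ((invariant_iff_isBalanced ρ' hfin').1 hinv).eq_mul_toReal_rhoH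
      (fun _ _ => ENNReal.toReal_nonneg) s.1 s.2
  have hpos : 0 < (ρ' (true, 0)).toReal := by
    refine ENNReal.toReal_nonneg.lt_of_ne fun h => hs₀ ?_
    have := hρ' s₀
    rw [← h, mul_zero, zero_mul, ENNReal.toReal_eq_zero_iff] at this
    exact this.resolve_right (hfin' s₀)
  refine ⟨ENNReal.ofReal (4 * (ρ' (true, 0)).toReal), by positivity, ENNReal.ofReal_ne_top,
    fun s => ?_⟩
  rw [← ENNReal.toReal_eq_toReal_iff' (hfin' s)
    (ENNReal.mul_ne_top ENNReal.ofReal_ne_top (rhoH_ne_top s)), ENNReal.toReal_mul,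
    ENNReal.toReal_ofReal (by positivity), hρ']

end
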